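/- In the canonical form of the linear regression model, let Q = (Q₁ Q₂) be an n×n orthogonal matrix with the columns of Q₁ spanning the column space of X, let β̂ = β̂(Y) be such that Y ↦ Xβ̂(Y) is differentiable, and let θ̂(Z, U) = Q₁ᵗXβ̂(Q(Zᵗ,Uᵗ)ᵗ). Then div_Y(Xβ̂(Y)) = div_Z θ̂(Z, U), where (Zᵗ, Uᵗ)ᵗ = QᵗY; that is, the divergence with respect to Y of Xβ̂ equals the divergence with respect to Z of θ̂. -/

import Mathlib

/-!
Write `D` for the Jacobian of `g(Y) = Xβ̂(Y)` at `Y`. Since `QQᵗ = 1`, the point `Q(Zᵗ,Uᵗ)ᵗ` at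
`(Z, U) = QᵗY` is `Y` again, so by the chain rule the Jacobian of `θ̂(·, U)` at `Z` is `Q₁ᵗ D Q₁`, and
`tr(Q₁ᵗ D Q₁) = tr(Q₁Q₁ᵗ D)`. Finally `g` takes values in the column space of `X`, on which the
orthogonal projection `Q₁Q₁ᵗ` is the identity, so differentiating `Q₁Q₁ᵗ g = g` gives `Q₁Q₁ᵗ D = D`.
-/

open MeasureTheory Matrix

/-- The divergence of a map `g : ℝ^ι → ℝ^ι` at `x`: `∑ i, ∂gᵢ(x)/∂xᵢ`. -/
noncomputable def vecDiv {ι : Type*} [Fintype ι] [DecidableEq ι]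
    (g : (ι → ℝ) → (ι → ℝ)) (x : ι → ℝ) : ℝ :=
  ∑ i, fderiv ℝ g x (Pi.single i 1) i

theorem LinearMap.trace_comp_comp_eq_of_comp_comp_eq {R M N : Type*} [CommRing R]
    [AddCommGroup M] [Module R M] [Module.Free R M] [Module.Finite R M]
    [AddCommGroup N] [Module R N] [Module.Free R N] [Module.Finite R N]
    (L : N →ₗ[R] M) (P : M →ₗ[R] N) (D : M →ₗ[R] M) (h : L ∘ₗ P ∘ₗ D = D) :
    trace R N (P ∘ₗ D ∘ₗ L) = trace R M D := by
  rw [← LinearMap.comp_assoc, trace_comp_comm', h]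

theorem ContinuousLinearMap.comp_fderiv_eq_of_comp_eq {𝕜 E F : Type*} [NontriviallyNormedField 𝕜]
    [NormedAddCommGroup E] [NormedSpace 𝕜 E] [NormedAddCommGroup F] [NormedSpace 𝕜 F]
    (P : F →L[𝕜] F) {g : E → F} {x : E} (hg : DifferentiableAt 𝕜 g x)
    (hP : ∀ y, P (g y) = g y) : P.comp (fderiv 𝕜 g x) = fderiv 𝕜 g x := by
  have h : HasFDerivAt g (P.comp (fderiv 𝕜 g x)) x := by
    simpa only [Function.comp_def, hP] using P.hasFDerivAt.comp x hg.hasFDerivAt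
  exact h.fderiv.symm

section Divergence

variable {ι κ : Type*} [Fintype ι] [DecidableEq ι] [Fintype κ] [DecidableEq κ]

theorem vecDiv_eq_trace_fderiv (g : (ι → ℝ) → (ι → ℝ)) (x : ι → ℝ) :
    vecDiv g x = LinearMap.trace ℝ (ι → ℝ) (fderiv ℝ g x : (ι → ℝ) →ₗ[ℝ] (ι → ℝ)) := by
  rw [LinearMap.trace_eq_matrix_trace ℝ (Pi.basisFun ℝ ι), vecDiv, Matrix.trace]
  simp

theorem vecDiv_mulVec_comp_affine {g : (ι → ℝ) → (ι → ℝ)} (A : Matrix ι κ ℝ) (B : Matrix κ ι ℝ)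
    (c : ι → ℝ) (z : κ → ℝ) (hg : DifferentiableAt ℝ g (A *ᵥ z + c))
    (hrange : ∀ y, (A * B) *ᵥ g y = g y) :
    vecDiv (fun z' => B *ᵥ g (A *ᵥ z' + c)) z = vecDiv g (A *ᵥ z + c) := by
  set L := LinearMap.toContinuousLinearMap A.mulVecLin
  set P := LinearMap.toContinuousLinearMap B.mulVecLin
  have hderiv : fderiv ℝ (fun z' => B *ᵥ g (A *ᵥ z' + c)) z
      = P.comp ((fderiv ℝ g (A *ᵥ z + c)).comp L) :=
    (P.hasFDerivAt.comp z (hg.hasFDerivAt.comp z (L.hasFDerivAt.add_const c))).fderiv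
  have hproj : (L.comp P).comp (fderiv ℝ g (A *ᵥ z + c)) = fderiv ℝ g (A *ᵥ z + c) :=
    (L.comp P).comp_fderiv_eq_of_comp_eq hg fun y => by simpa [L, P, mulVec_mulVec] using hrange y
  rw [vecDiv_eq_trace_fderiv, vecDiv_eq_trace_fderiv, hderiv]
  exact LinearMap.trace_comp_comp_eq_of_comp_comp_eq _ _ _
    (congrArg ContinuousLinearMap.toLinearMap hproj)

end Divergence

theorem transpose_mul_self_eq_one_of_fromCols {n p q : Type*} [Fintype n]
    [DecidableEq p] [DecidableEq q] {Q₁ : Matrix n p ℝ} {Q₂ : Matrix n q ℝ}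
    (h : (fromCols Q₁ Q₂)ᵀ * fromCols Q₁ Q₂ = 1) : Q₁ᵀ * Q₁ = 1 := by
  rw [transpose_fromCols, fromRows_mul_fromCols, ← fromBlocks_one, fromBlocks_inj] at h
  exact h.1

theorem divergence_canonical_form_general {n p q : ℕ}
    (X : Matrix (Fin n) (Fin p) ℝ)
    (Q₁ : Matrix (Fin n) (Fin p) ℝ) (Q₂ : Matrix (Fin n) (Fin q) ℝ)
    (horth : (Matrix.fromCols Q₁ Q₂)ᵀ * Matrix.fromCols Q₁ Q₂ = 1)
    (horth' : Matrix.fromCols Q₁ Q₂ * (Matrix.fromCols Q₁ Q₂)ᵀ = 1)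
    (hspan : LinearMap.range Q₁.mulVecLin = LinearMap.range X.mulVecLin)
    (b : (Fin n → ℝ) → (Fin p → ℝ))
    (hdiff : Differentiable ℝ (fun y => X *ᵥ b y))
    (y : Fin n → ℝ) :
    vecDiv (fun y' => X *ᵥ b y') y
      = vecDiv
          (fun z => Q₁ᵀ *ᵥ (X *ᵥ b
            (Matrix.fromCols Q₁ Q₂ *ᵥ (Sum.elim z (Q₂ᵀ *ᵥ y) : Fin p ⊕ Fin q → ℝ))))
          (Q₁ᵀ *ᵥ y) := by
  have hy : Q₁ *ᵥ (Q₁ᵀ *ᵥ y) + Q₂ *ᵥ (Q₂ᵀ *ᵥ y) = y := by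
    rw [transpose_fromCols, fromCols_mul_fromRows] at horth'
    rw [mulVec_mulVec, mulVec_mulVec, ← add_mulVec, horth', one_mulVec]
  have hrange (y' : Fin n → ℝ) : (Q₁ * Q₁ᵀ) *ᵥ (X *ᵥ b y') = X *ᵥ b y' := by
    obtain ⟨v, hv⟩ : X *ᵥ b y' ∈ LinearMap.range Q₁.mulVecLin := hspan ▸ ⟨b y', rfl⟩
    rw [← hv, mulVecLin_apply, mulVec_mulVec, Matrix.mul_assoc,
      transpose_mul_self_eq_one_of_fromCols horth, Matrix.mul_one]
  simp_rw [fromCols_mulVec_sumElim]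
  have hchain := vecDiv_mulVec_comp_affine (g := fun y' => X *ᵥ b y') Q₁ Q₁ᵀ
    (Q₂ *ᵥ (Q₂ᵀ *ᵥ y)) (Q₁ᵀ *ᵥ y) (hdiff _) hrange
  rw [hy] at hchain
  exact hchain.symm

/-- **Equality of divergences in the canonical form.**
With `Q = (Q₁ Q₂)` orthogonal, the columns of `Q₁` spanning the column space of `X`,
`Z = Q₁ᵗY`, `U = Q₂ᵗY` and `θ̂(Z,U) = Q₁ᵗ X β̂(Q(Zᵗ,Uᵗ)ᵗ)`, the divergence of `Y ↦ Xβ̂(Y)`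
at `Y` equals the divergence of `Z' ↦ θ̂(Z', U)` at `Z`. -/
theorem divergence_canonical_form {n p q : ℕ}
    (X : Matrix (Fin n) (Fin p) ℝ) (hX : X.rank = p)
    (Q₁ : Matrix (Fin n) (Fin p) ℝ) (Q₂ : Matrix (Fin n) (Fin q) ℝ)
    (horth : (Matrix.fromCols Q₁ Q₂)ᵀ * Matrix.fromCols Q₁ Q₂ = 1)
    (horth' : Matrix.fromCols Q₁ Q₂ * (Matrix.fromCols Q₁ Q₂)ᵀ = 1)
    (hspan : LinearMap.range Q₁.mulVecLin = LinearMap.range X.mulVecLin)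
    (b : (Fin n → ℝ) → (Fin p → ℝ))
    (hdiff : Differentiable ℝ (fun y => X *ᵥ b y))
    (y : Fin n → ℝ) :
    vecDiv (fun y' => X *ᵥ b y') y
      = vecDiv
          (fun z => Q₁ᵀ *ᵥ (X *ᵥ b
            (Matrix.fromCols Q₁ Q₂ *ᵥ (Sum.elim z (Q₂ᵀ *ᵥ y) : Fin p ⊕ Fin q → ℝ))))
          (Q₁ᵀ *ᵥ y) :=
  divergence_canonical_form_general X Q₁ Q₂ horth horth' hspan b hdiff y
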